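/- arXiv:cs/0405042 — 2 statements merged into one kernel-verified Lean document; each statement's English description precedes it below -/
import Mathlib

section
/- Let G be a finite simple graph and name : V → ℕ a labeling such that adjacent vertices receive distinct names. Then there is exactly one function ℓ : V → Bool satisfying, for every vertex p: ℓ p = true if and only if ℓ q = false for every neighbor q of p with name q < name p. Moreover, for this unique ℓ, the set {p | ℓ p = true} is a maximal independent set of G. -/
open Classical in
noncomputable def leadAux {V : Type*} (G : SimpleGraph V) (name : V → ℕ) : V → Bool :=
  fun p => decide (∀ q, G.Adj p q → name q < name p → leadAux G name q = false)
termination_by p => name p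
decreasing_by all_goals assumption

/-- With locally distinct names there is a unique `ℓ : V → Bool` satisfying
the greedy leader-election fixed-point condition, and its `true`-set is a
maximal independent set. -/
theorem stmt_2 {V : Type*} [Fintype V] (G : SimpleGraph V) (name : V → ℕ)
    (hname : ∀ p q : V, G.Adj p q → name p ≠ name q) :
    (∃! ℓ : V → Bool,
        ∀ p : V, ℓ p = true ↔ ∀ q, G.Adj p q → name q < name p → ℓ q = false) ∧
      (∀ ℓ : V → Bool,
        (∀ p : V, ℓ p = true ↔ ∀ q, G.Adj p q → name q < name p → ℓ q = false) →
        (∀ p ∈ {v | ℓ v = true}, ∀ q ∈ {v | ℓ v = true}, ¬ G.Adj p q) ∧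
          ∀ T : Set V, (∀ p ∈ T, ∀ q ∈ T, ¬ G.Adj p q) →
            {v | ℓ v = true} ⊆ T → T = {v | ℓ v = true}) := by
  constructor
  · refine ⟨leadAux G name, ?_, ?_⟩
    · intro p
      rw [leadAux]
      simp
    · intro ℓ hℓ
      have key : ∀ n p, name p < n → ℓ p = leadAux G name p := by
        intro n
        induction n with
        | zero => omega
        | succ n ih =>
          intro p hp
          have h1 : ℓ p = true ↔ leadAux G name p = true := by
            rw [hℓ p, leadAux]
            simp only [decide_eq_true_iff]
            constructor <;> intro h q hadj hlt
            · rw [← ih q (by omega), h q hadj hlt]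
            · rw [ih q (by omega), h q hadj hlt]
          cases hb : leadAux G name p with
          | true => exact h1.mpr hb
          | false =>
            cases hb' : ℓ p with
            | true => rw [hb] at h1; simp [hb'] at h1
            | false => rfl
      funext p
      exact key (name p + 1) p (by omega)
  · intro ℓ hℓ
    have indep : ∀ p ∈ {v | ℓ v = true}, ∀ q ∈ {v | ℓ v = true}, ¬ G.Adj p q := by
      intro p hp q hq hadj
      rcases lt_or_gt_of_ne (hname p q hadj) with h | h
      · exact absurd ((hℓ q).mp hq p hadj.symm h) (by simp [Set.mem_setOf_eq.mp hp])
      · exact absurd ((hℓ p).mp hp q hadj h) (by simp [Set.mem_setOf_eq.mp hq])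
    refine ⟨indep, ?_⟩
    intro T hT hsub
    apply Set.Subset.antisymm _ hsub
    intro t ht
    show ℓ t = true
    by_contra hfalse
    have : ¬ ∀ q, G.Adj t q → name q < name t → ℓ q = false := by
      intro h
      exact hfalse ((hℓ t).mpr h)
    push_neg at this
    obtain ⟨q, hadj, hlt, hq⟩ := this
    have hq' : ℓ q = true := by simpa using hq
    exact hT t ht q (hsub hq') hadj
end

section
/- Let G be a finite simple graph and name : V → Fin Δ a labeling such that adjacent vertices receive distinct names. Define the synchronous update F : (V → Bool) → (V → Bool) by (F ℓ) p = true if and only if ℓ q = false for every neighbor q of p with name q < name p. Then for every initial assignment ℓ₀ : V → Bool, the Δ-fold iterate F^[Δ] ℓ₀ equals the unique fixed point ℓ* of F; in particular the update stabilizes within Δ synchronous rounds from any initial state. -/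
/-- The synchronous greedy update stabilizes to the unique fixed point within
`Δ` rounds from any initial state. -/
theorem stmt_3 {V : Type*} [Fintype V] (G : SimpleGraph V) (Δ : ℕ)
    (name : V → Fin Δ)
    (hname : ∀ p q : V, G.Adj p q → name p ≠ name q)
    (F : (V → Bool) → (V → Bool))
    (hF : ∀ (ℓ : V → Bool) (p : V),
      (F ℓ) p = true ↔ ∀ q, G.Adj p q → name q < name p → ℓ q = false) :
    ∃ ℓs : V → Bool, F ℓs = ℓs ∧ (∀ ℓ : V → Bool, F ℓ = ℓ → ℓ = ℓs) ∧
      ∀ ℓ₀ : V → Bool, F^[Δ] ℓ₀ = ℓs := by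
  have key : ∀ k (ℓ ℓ' : V → Bool) (p : V), (name p : ℕ) < k →
      F^[k] ℓ p = F^[k] ℓ' p := by
    intro k
    induction k with
    | zero => intro ℓ ℓ' p hp; exact absurd hp (Nat.not_lt_zero _)
    | succ k ih =>
      intro ℓ ℓ' p hp
      rw [Function.iterate_succ_apply', Function.iterate_succ_apply']
      have h1 := hF (F^[k] ℓ) p
      have h2 := hF (F^[k] ℓ') p
      have : (∀ q, G.Adj p q → name q < name p → F^[k] ℓ q = false) ↔
          (∀ q, G.Adj p q → name q < name p → F^[k] ℓ' q = false) := by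
        constructor <;> intro h q ha hlt <;>
          have hq : (name q : ℕ) < k := lt_of_lt_of_le hlt (Nat.lt_succ_iff.mp hp)
        · rw [← ih ℓ ℓ' q hq]; exact h q ha hlt
        · rw [ih ℓ ℓ' q hq]; exact h q ha hlt
      have := (h1.trans this).trans h2.symm
      cases hb : F (F^[k] ℓ) p <;> cases hb' : F (F^[k] ℓ') p <;> simp_all
  set ℓs : V → Bool := F^[Δ] (fun _ => false) with hℓs
  have hall : ∀ ℓ₀ : V → Bool, F^[Δ] ℓ₀ = ℓs := by
    intro ℓ₀; funext p; exact key Δ ℓ₀ _ p (name p).isLt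
  refine ⟨ℓs, ?_, ?_, hall⟩
  · have : F (F^[Δ] (fun _ => false)) = F^[Δ] (F (fun _ => false)) := by
      rw [← Function.iterate_succ_apply' F Δ, Function.iterate_succ_apply]
    rw [hℓs, this, hall]
  · intro ℓ hfix
    have : F^[Δ] ℓ = ℓ := Function.iterate_fixed hfix Δ
    rw [← this, hall]
end
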